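/- Let μ be a doubling measure on ℝⁿ with doubling exponent θ, i.e., there is c > 0 with μ(2^{-j}Q) ≥ c·2^{-jθ}·μ(Q) for all cubes Q and all j ∈ ℕ. If κ > θ + λ − n (with 0 ≤ λ < n), then the κ-th order fractional Poisson integral P^λ_κ(Q, μ) = ∫_{ℝⁿ} ℓ(Q)^κ / (ℓ(Q) + |y − c_Q|)^{n+κ−λ} dμ(y) is comparable, with constants depending only on n, κ, λ, θ, c, to |Q|^{λ/n − 1}·μ(Q), where |Q| denotes the Lebesgue measure of Q and ℓ(Q) its side length. -/

import Mathlib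

open MeasureTheory
open scoped ENNReal

noncomputable section

/-- An axis-parallel cube in `ℝⁿ` with center `c` and side length `r`. -/
structure Cube (n : ℕ) where
  c : Fin n → ℝ
  r : ℝ

namespace Cube

variable {n : ℕ}

def toSet (Q : Cube n) : Set (Fin n → ℝ) :=
  {x | ∀ i, |x i - Q.c i| ≤ Q.r / 2}

/-- Dilate a cube about its center by a factor `t`. -/
def dilate (Q : Cube n) (t : ℝ) : Cube n := ⟨Q.c, t * Q.r⟩

end Cube

/-- The `κ`-th order `λ`-fractional Poisson integral of a measure relative to a cube. -/
def poissonCube (n κ : ℕ) (lam : ℝ) (Q : Cube n) (μ : Measure (Fin n → ℝ)) : ℝ≥0∞ :=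
  ∫⁻ y, ENNReal.ofReal (Q.r ^ (κ : ℝ) / (Q.r + dist y Q.c) ^ ((n : ℝ) + κ - lam)) ∂μ

/-- A cube is a closed ball in the sup metric. -/
lemma myCube_ball {n : ℕ} (Q : Cube n) (h : 0 ≤ Q.r) :
    Q.toSet = Metric.closedBall Q.c (Q.r / 2) := by
  ext x
  simp only [Cube.toSet, Set.mem_setOf_eq, Metric.mem_closedBall]
  rw [dist_pi_le_iff (by linarith : (0:ℝ) ≤ Q.r / 2)]
  simp [Real.dist_eq]

lemma myCube_volume {n : ℕ} (Q : Cube n) (h : 0 ≤ Q.r) :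
    volume Q.toSet = ENNReal.ofReal (Q.r ^ n) := by
  have hset : Q.toSet = Set.pi Set.univ (fun i => Set.Icc (Q.c i - Q.r/2) (Q.c i + Q.r/2)) := by
    ext x
    simp only [Cube.toSet, Set.mem_setOf_eq, Set.mem_pi, Set.mem_univ, Set.mem_Icc,
      forall_true_left]
    constructor
    · intro hx i
      have := hx i
      rw [abs_le] at this
      constructor <;> linarith [this.1, this.2]
    · intro hx i
      rw [abs_le]
      constructor <;> linarith [(hx i).1, (hx i).2]
  rw [hset, volume_pi_pi]
  have : ∀ i : Fin n, volume (Set.Icc (Q.c i - Q.r/2) (Q.c i + Q.r/2)) = ENNReal.ofReal Q.r := by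
    intro i
    rw [Real.volume_Icc]
    congr 1
    ring
  simp only [this, Finset.prod_const, Finset.card_univ, Fintype.card_fin]
  rw [← ENNReal.ofReal_pow h]

/-- **Poisson averages reduce to ordinary averages for doubling measures.**
If `μ` is doubling with doubling exponent `θ` (constant `c`), and `κ > θ + λ − n`,
then `P^λ_κ(Q, μ) ≈ |Q|^{λ/n − 1} μ(Q)` with constants depending only on `n, κ, λ, θ, c`. -/
theorem stmt_1 (n κ : ℕ) (lam θ c : ℝ) (hlam0 : 0 ≤ lam) (hlamn : lam < n)
    (hc : 0 < c) (hκ : θ + lam - n < (κ : ℝ)) :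
    ∃ C > (0 : ℝ),
      ∀ (μ : Measure (Fin n → ℝ)), IsLocallyFiniteMeasure μ →
      ∀ Cd : ℝ≥0∞,
      (∀ Q : Cube n, 0 < Q.r → μ (Q.dilate 2).toSet ≤ Cd * μ Q.toSet) →
      (∀ Q : Cube n, 0 < Q.r → ∀ j : ℕ,
        ENNReal.ofReal (c * 2 ^ (-((j : ℝ) * θ))) * μ Q.toSet ≤ μ ((Q.dilate (2 ^ (-(j : ℝ)))).toSet)) →
      ∀ Q : Cube n, 0 < Q.r →
        ((volume Q.toSet) ^ (lam / n - 1) * μ Q.toSet ≤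
            ENNReal.ofReal C * poissonCube n κ lam Q μ ∧
          poissonCube n κ lam Q μ ≤
            ENNReal.ofReal C * ((volume Q.toSet) ^ (lam / n - 1) * μ Q.toSet)) := by
  have hn : 0 < n := by
    rcases Nat.eq_zero_or_pos n with h | h
    · subst h; norm_num at hlamn; linarith
    · exact h
  have hnR : (0:ℝ) < n := by exact_mod_cast hn
  have hκ0 : (0:ℝ) ≤ κ := Nat.cast_nonneg κ
  set α : ℝ := (n:ℝ) + κ - lam with hαdef
  have hα : 0 < α := by rw [hαdef]; linarith
  have hθα : θ - α < 0 := by rw [hαdef]; linarith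
  set ρ : ℝ := 2 ^ (θ - α) with hρdef
  have hρ0 : 0 < ρ := Real.rpow_pos_of_pos two_pos _
  have hρ1 : ρ < 1 := Real.rpow_lt_one_of_one_lt_of_neg one_lt_two hθα
  set K : ℝ := (4:ℝ) ^ α / c with hKdef
  have hK : 0 < K := div_pos (Real.rpow_pos_of_pos (by norm_num) _) hc
  have h32 : (0:ℝ) < (3/2:ℝ) ^ α := Real.rpow_pos_of_pos (by norm_num) _
  have h23 : (0:ℝ) < (2/3:ℝ) ^ α := Real.rpow_pos_of_pos (by norm_num) _
  set C : ℝ := (3/2:ℝ) ^ α + K / (1 - ρ) with hCdef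
  have hC : 0 < C := by
    have := div_pos hK (by linarith : (0:ℝ) < 1 - ρ)
    rw [hCdef]; linarith
  refine ⟨C, hC, ?_⟩
  intro μ _ Cd _ hdbl Q hQr
  set r : ℝ := Q.r with hrdef
  have hQball : Q.toSet = Metric.closedBall Q.c (r/2) := myCube_ball Q hQr.le
  set kern : (Fin n → ℝ) → ℝ≥0∞ :=
    fun y => ENNReal.ofReal (r ^ (κ:ℝ) / (r + dist y Q.c) ^ α) with hkerndef
  have hPdef : poissonCube n κ lam Q μ = ∫⁻ y, kern y ∂μ := rfl
  have hvol : (volume Q.toSet) ^ (lam / (n:ℝ) - 1) = ENNReal.ofReal (r ^ (lam - n)) := by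
    rw [myCube_volume Q hQr.le, ← Real.rpow_natCast r n,
      ENNReal.ofReal_rpow_of_pos (Real.rpow_pos_of_pos hQr _), ← Real.rpow_mul hQr.le]
    congr 1
    field_simp
  -- ### Lower bound
  have hlow : ENNReal.ofReal ((2/3:ℝ)^α * r ^ (lam - n)) * μ Q.toSet ≤ poissonCube n κ lam Q μ := by
    have hmeas : MeasurableSet Q.toSet := by
      rw [hQball]; exact measurableSet_closedBall
    have hpt : ∀ y ∈ Q.toSet, ENNReal.ofReal ((2/3:ℝ)^α * r ^ (lam - n)) ≤ kern y := by
      intro y hy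
      rw [hQball, Metric.mem_closedBall] at hy
      apply ENNReal.ofReal_le_ofReal
      have hd0 : 0 ≤ dist y Q.c := dist_nonneg
      have h1 : (r + dist y Q.c) ^ α ≤ (3/2 * r) ^ α :=
        Real.rpow_le_rpow (by linarith) (by linarith) hα.le
      have hpos : (0:ℝ) < (r + dist y Q.c) ^ α :=
        Real.rpow_pos_of_pos (by linarith) _
      have h2 : r ^ (κ:ℝ) / (3/2 * r) ^ α ≤ r ^ (κ:ℝ) / (r + dist y Q.c) ^ α :=
        div_le_div_of_nonneg_left (Real.rpow_nonneg hQr.le _) hpos h1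
      refine le_trans (le_of_eq ?_) h2
      have e1 : ((3:ℝ)/2 * r) ^ α = (3/2:ℝ)^α * r^α := Real.mul_rpow (by norm_num) hQr.le
      have e2 : (2/3:ℝ)^α = ((3/2:ℝ)^α)⁻¹ := by
        rw [← Real.inv_rpow (by norm_num : (0:ℝ) ≤ 3/2)]; norm_num
      have e3 : r ^ (lam - (n:ℝ)) = r ^ (κ:ℝ) / r ^ α := by
        rw [← Real.rpow_sub hQr]; congr 1; rw [hαdef]; ring
      have hrα : (0:ℝ) < r ^ α := Real.rpow_pos_of_pos hQr _
      rw [e1, e2, e3]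
      field_simp
    calc ENNReal.ofReal ((2/3:ℝ)^α * r ^ (lam - n)) * μ Q.toSet
        = ∫⁻ _ in Q.toSet, ENNReal.ofReal ((2/3:ℝ)^α * r ^ (lam - n)) ∂μ :=
          (setLIntegral_const _ _).symm
      _ ≤ ∫⁻ y in Q.toSet, kern y ∂μ := setLIntegral_mono' hmeas hpt
      _ ≤ ∫⁻ y, kern y ∂μ := setLIntegral_le_lintegral _ _
      _ = poissonCube n κ lam Q μ := hPdef.symm
  -- ### Upper bound
  have hub : poissonCube n κ lam Q μ ≤
      ENNReal.ofReal (C * r ^ (lam - n)) * μ Q.toSet := by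
    set B : ℕ → Set (Fin n → ℝ) :=
      fun j => Metric.closedBall Q.c ((2:ℝ)^(j:ℝ) * r / 2) with hBdef
    set A : ℕ → Set (Fin n → ℝ) := fun j =>
      match j with
      | 0 => B 0
      | (j+1) => B (j+1) \ B j
      with hAdef
    have hAB : ∀ j, A j ⊆ B j := by
      intro j
      cases j with
      | zero => exact subset_rfl
      | succ m => exact Set.diff_subset
    have hAmeas : ∀ j, MeasurableSet (A j) := by
      intro j
      cases j with
      | zero => exact measurableSet_closedBall
      | succ m => exact measurableSet_closedBall.diff measurableSet_closedBall
    have hAlb : ∀ j : ℕ, ∀ y ∈ A j, (2:ℝ)^(j:ℝ) * r / 4 ≤ r + dist y Q.c := by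
      intro j y hy
      have hd0 : 0 ≤ dist y Q.c := dist_nonneg
      cases j with
      | zero =>
        have : (2:ℝ)^((0:ℕ):ℝ) = 1 := by norm_num
        rw [this]; linarith
      | succ m =>
        obtain ⟨_, hy2⟩ := hy
        simp only [hBdef, Metric.mem_closedBall, not_le] at hy2
        have h2 : (2:ℝ)^(((m+1:ℕ)):ℝ) = 2 * (2:ℝ)^((m:ℕ):ℝ) := by
          rw [Real.rpow_natCast, Real.rpow_natCast, pow_succ]; ring
        rw [h2]; linarith
    have hcover : (⋃ j, A j) = Set.univ := by
      refine Set.eq_univ_of_forall fun y => Set.mem_iUnion.mpr ?_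
      have hex : ∃ j : ℕ, dist y Q.c ≤ (2:ℝ)^(j:ℝ) * r / 2 := by
        obtain ⟨m, hm⟩ := pow_unbounded_of_one_lt (dist y Q.c * 2 / r) one_lt_two
        refine ⟨m, ?_⟩
        rw [Real.rpow_natCast]
        rw [div_lt_iff₀ hQr] at hm
        linarith
      haveI : DecidablePred fun j : ℕ => dist y Q.c ≤ (2:ℝ)^(j:ℝ) * r / 2 :=
        fun _ => Classical.dec _
      by_cases h0 : dist y Q.c ≤ (2:ℝ)^((0:ℕ):ℝ) * r / 2
      · exact ⟨0, Metric.mem_closedBall.mpr h0⟩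
      · have hpos : Nat.find hex ≠ 0 := by
          intro h
          apply h0
          have hspec := Nat.find_spec hex
          rw [h] at hspec
          exact hspec
        obtain ⟨m, hm⟩ := Nat.exists_eq_succ_of_ne_zero hpos
        have hspec := Nat.find_spec hex
        rw [hm] at hspec
        refine ⟨m + 1, ?_, ?_⟩
        · exact Metric.mem_closedBall.mpr hspec
        · intro hmem
          have hlt : m < Nat.find hex := by omega
          exact Nat.find_min hex hlt (Metric.mem_closedBall.mp hmem)
    have hkey : ∀ j : ℕ, ∫⁻ y in A j, kern y ∂μ ≤
        ENNReal.ofReal (r^(lam-n) * (K * ρ^j)) * μ Q.toSet := by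
      intro j
      have h2j : (0:ℝ) < (2:ℝ)^(j:ℝ) := Real.rpow_pos_of_pos two_pos _
      set bj : ℝ := r ^ (κ:ℝ) / ((2:ℝ)^(j:ℝ) * r / 4) ^ α with hbjdef
      have hbase : (0:ℝ) < (2:ℝ)^(j:ℝ) * r / 4 := by positivity
      have hbj0 : 0 ≤ bj := by
        rw [hbjdef]
        exact div_nonneg (Real.rpow_nonneg hQr.le _) (Real.rpow_nonneg hbase.le _)
      have step1 : ∫⁻ y in A j, kern y ∂μ ≤ ENNReal.ofReal bj * μ (A j) := by
        calc ∫⁻ y in A j, kern y ∂μ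
            ≤ ∫⁻ _ in A j, ENNReal.ofReal bj ∂μ := by
              apply setLIntegral_mono' (hAmeas j)
              intro y hy
              apply ENNReal.ofReal_le_ofReal
              have hlb := hAlb j y hy
              have hpos : (0:ℝ) < ((2:ℝ)^(j:ℝ) * r / 4) ^ α := Real.rpow_pos_of_pos hbase _
              exact div_le_div_of_nonneg_left (Real.rpow_nonneg hQr.le _) hpos
                (Real.rpow_le_rpow hbase.le hlb hα.le)
          _ = ENNReal.ofReal bj * μ (A j) := setLIntegral_const _ _
      have step2 : μ (A j) ≤ μ (B j) := measure_mono (hAB j)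
      have hBQ : (Q.dilate ((2:ℝ)^(j:ℝ))).toSet = B j := by
        have hr' : (0:ℝ) ≤ (Q.dilate ((2:ℝ)^(j:ℝ))).r := by
          show (0:ℝ) ≤ (2:ℝ)^(j:ℝ) * Q.r
          positivity
        rw [myCube_ball _ hr']
        rfl
      have hdd : ((Q.dilate ((2:ℝ)^(j:ℝ))).dilate ((2:ℝ)^(-(j:ℝ)))).toSet = Q.toSet := by
        have hr'' : (0:ℝ) ≤ ((Q.dilate ((2:ℝ)^(j:ℝ))).dilate ((2:ℝ)^(-(j:ℝ)))).r := by
          show (0:ℝ) ≤ (2:ℝ)^(-(j:ℝ)) * ((2:ℝ)^(j:ℝ) * Q.r)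
          positivity
        rw [myCube_ball _ hr'', hQball]
        have hrad : (2:ℝ)^(-(j:ℝ)) * ((2:ℝ)^(j:ℝ) * Q.r) / 2 = Q.r / 2 := by
          rw [← mul_assoc, ← Real.rpow_add two_pos]
          norm_num
        show Metric.closedBall Q.c ((2:ℝ)^(-(j:ℝ)) * ((2:ℝ)^(j:ℝ) * Q.r) / 2) =
          Metric.closedBall Q.c (r / 2)
        rw [hrad]
      have hdb := hdbl (Q.dilate ((2:ℝ)^(j:ℝ)))
        (by show (0:ℝ) < (2:ℝ)^(j:ℝ) * Q.r; positivity) j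
      rw [hdd, hBQ] at hdb
      set aj : ℝ := c * 2 ^ (-((j:ℝ) * θ)) with hajdef
      have haj : 0 < aj := mul_pos hc (Real.rpow_pos_of_pos two_pos _)
      have hμB : μ (B j) ≤ (ENNReal.ofReal aj)⁻¹ * μ Q.toSet := by
        have hne : ENNReal.ofReal aj ≠ 0 := (ENNReal.ofReal_pos.mpr haj).ne'
        have heq : μ (B j) = (ENNReal.ofReal aj)⁻¹ * (ENNReal.ofReal aj * μ (B j)) := by
          rw [← mul_assoc, ENNReal.inv_mul_cancel hne ENNReal.ofReal_ne_top, one_mul]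
        rw [heq]
        exact mul_le_mul_right hdb _
      have hreal : bj * aj⁻¹ = r^(lam-n) * (K * ρ^j) := by
        have e1 : ((2:ℝ)^(j:ℝ) * r / 4) ^ α = (2:ℝ)^((j:ℝ)*α) * r^α / (4:ℝ)^α := by
          rw [Real.div_rpow (by positivity) (by norm_num), Real.mul_rpow h2j.le hQr.le,
            ← Real.rpow_mul (by norm_num : (0:ℝ) ≤ 2)]
        have e2 : aj⁻¹ = c⁻¹ * (2:ℝ)^((j:ℝ)*θ) := by
          rw [hajdef, mul_inv, Real.rpow_neg (by norm_num : (0:ℝ) ≤ 2), inv_inv]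
        have e3 : ρ^j = (2:ℝ)^((θ-α)*(j:ℝ)) := by
          rw [← Real.rpow_natCast ρ j, hρdef, ← Real.rpow_mul (by norm_num : (0:ℝ) ≤ 2)]
        have e4 : r ^ (lam - (n:ℝ)) = r ^ (κ:ℝ) / r ^ α := by
          rw [← Real.rpow_sub hQr]; congr 1; rw [hαdef]; ring
        have e5 : (2:ℝ)^((θ-α)*(j:ℝ)) = (2:ℝ)^((j:ℝ)*θ) / (2:ℝ)^((j:ℝ)*α) := by
          rw [← Real.rpow_sub two_pos]; congr 1; ring
        have hrα : (0:ℝ) < r ^ α := Real.rpow_pos_of_pos hQr _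
        have h2jα : (0:ℝ) < (2:ℝ)^((j:ℝ)*α) := Real.rpow_pos_of_pos two_pos _
        have h2jθ : (0:ℝ) < (2:ℝ)^((j:ℝ)*θ) := Real.rpow_pos_of_pos two_pos _
        have h4α : (0:ℝ) < (4:ℝ)^α := Real.rpow_pos_of_pos (by norm_num) _
        rw [hbjdef, e1, e2, e3, e4, e5, hKdef]
        field_simp
      calc ∫⁻ y in A j, kern y ∂μ
          ≤ ENNReal.ofReal bj * μ (B j) := step1.trans (mul_le_mul_right step2 _)
        _ ≤ ENNReal.ofReal bj * ((ENNReal.ofReal aj)⁻¹ * μ Q.toSet) := mul_le_mul_right hμB _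
        _ = ENNReal.ofReal (bj * aj⁻¹) * μ Q.toSet := by
            rw [ENNReal.ofReal_mul hbj0, ENNReal.ofReal_inv_of_pos haj, mul_assoc]
        _ = ENNReal.ofReal (r^(lam-n) * (K * ρ^j)) * μ Q.toSet := by rw [hreal]
    have hnn : ∀ j : ℕ, 0 ≤ r^(lam-n) * (K * ρ^j) := by
      intro j
      have := Real.rpow_nonneg hQr.le (lam - n)
      positivity
    have hsummable : Summable (fun j : ℕ => r^(lam-n) * (K * ρ^j)) := by
      apply Summable.mul_left
      exact (summable_geometric_of_lt_one hρ0.le hρ1).mul_left K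
    calc poissonCube n κ lam Q μ = ∫⁻ y, kern y ∂μ := hPdef
      _ = ∫⁻ y in ⋃ j, A j, kern y ∂μ := by rw [hcover, Measure.restrict_univ]
      _ ≤ ∑' j, ∫⁻ y in A j, kern y ∂μ := lintegral_iUnion_le _ _
      _ ≤ ∑' j, ENNReal.ofReal (r^(lam-n) * (K * ρ^j)) * μ Q.toSet :=
          ENNReal.tsum_le_tsum hkey
      _ = ENNReal.ofReal (∑' j : ℕ, r^(lam-n) * (K * ρ^j)) * μ Q.toSet := by
          rw [ENNReal.tsum_mul_right, ENNReal.ofReal_tsum_of_nonneg hnn hsummable]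
      _ ≤ ENNReal.ofReal (C * r ^ (lam - n)) * μ Q.toSet := by
          apply mul_le_mul_left
          apply ENNReal.ofReal_le_ofReal
          have hsum : ∑' j : ℕ, r^(lam-n) * (K * ρ^j) = r^(lam-n) * (K * (1-ρ)⁻¹) := by
            rw [tsum_mul_left, tsum_mul_left, tsum_geometric_of_lt_one hρ0.le hρ1]
          rw [hsum]
          have hKC : K * (1-ρ)⁻¹ ≤ C := by
            rw [hCdef, div_eq_mul_inv K (1 - ρ)]; linarith
          rw [mul_comm C _]
          exact mul_le_mul_of_nonneg_left hKC (Real.rpow_nonneg hQr.le _)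
  constructor
  · -- lower comparability
    rw [hvol]
    have h1C : 1 ≤ C * (2/3:ℝ)^α := by
      have hmul : (3/2:ℝ)^α * (2/3:ℝ)^α = 1 := by
        rw [← Real.mul_rpow (by norm_num) (by norm_num)]
        norm_num
      have hKpos : 0 < K / (1 - ρ) := div_pos hK (by linarith)
      nlinarith
    calc ENNReal.ofReal (r ^ (lam - n)) * μ Q.toSet
        ≤ ENNReal.ofReal (C * ((2/3:ℝ)^α * r ^ (lam - n))) * μ Q.toSet := by
          apply mul_le_mul_left
          apply ENNReal.ofReal_le_ofReal
          have := Real.rpow_nonneg hQr.le (lam - n)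
          nlinarith
      _ = ENNReal.ofReal C * (ENNReal.ofReal ((2/3:ℝ)^α * r ^ (lam - n)) * μ Q.toSet) := by
          rw [ENNReal.ofReal_mul hC.le, mul_assoc]
      _ ≤ ENNReal.ofReal C * poissonCube n κ lam Q μ := mul_le_mul_right hlow _
  · -- upper comparability
    rw [hvol]
    calc poissonCube n κ lam Q μ
        ≤ ENNReal.ofReal (C * r ^ (lam - n)) * μ Q.toSet := hub
      _ = ENNReal.ofReal C * (ENNReal.ofReal (r ^ (lam - n)) * μ Q.toSet) := by
          rw [ENNReal.ofReal_mul hC.le, mul_assoc]
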